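/- arXiv:2405.01344 — 3 statements merged into one kernel-verified Lean document; each statement's English description precedes it below -/
import Mathlib

section
/- Let G be a connected simple graph containing three pairwise distinct vertices u, v, x that are pairwise false twins (N(u) = N(v) = N(x)). Then G has a resolving set of size at most k if and only if the graph G − x (obtained by deleting x) has a resolving set of size at most k − 1. -/
/-!
False twins are at equal distance from every other vertex, so a resolving set contains all but at
most one of `u, v, x`; distinct false twins are at distance `2`. Sending `x` to its twin `u`
retracts `G` onto `G - x` without changing distances between the other vertices. So a resolving
set `T` of `G - x` gives the resolving set `T ∪ {x}` of `G`. Conversely, replacing `S ∩ {u, v, x}`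
by `{u}` (by `{u, v}` if all three twins lie in `S`) turns a resolving set `S` of `G` into a
smaller one of `G - x`. The only delicate pairs are `v` and a vertex `b` outside the twins: if
nothing left separates them, each twin `t` could only be separated from `b` by `t` itself, forcing
all three twins into `S`.
-/

def resolvingSet {V : Type*} (G : SimpleGraph V) (S : Set V) : Prop :=
  ∀ x y : V, x ≠ y → ∃ w ∈ S, G.dist w x ≠ G.dist w y

namespace SimpleGraph

variable {V : Type*} {G : SimpleGraph V}

lemma dist_map_le {V' : Type*} {G' : SimpleGraph V'} (f : G →g G') {a b : V}
    (h : G.Reachable a b) : G'.dist (f a) (f b) ≤ G.dist a b := by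
  obtain ⟨p, hp⟩ := h.exists_walk_length_eq_dist
  simpa [hp] using dist_le (p.map f)

lemma dist_le_of_neighborSet_subset (hG : G.Connected) {a b w : V}
    (h : G.neighborSet a ⊆ G.neighborSet b) (hwa : w ≠ a) : G.dist w b ≤ G.dist w a := by
  obtain ⟨p, hp⟩ := hG.exists_walk_length_eq_dist a w
  obtain ⟨c, hac, q, rfl⟩ := p.exists_eq_cons_of_ne hwa.symm
  rw [dist_comm, dist_comm (u := w), ← hp]
  exact dist_le (Walk.cons (h hac) q)

lemma dist_eq_of_neighborSet_eq (hG : G.Connected) {a b w : V}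
    (h : G.neighborSet a = G.neighborSet b) (hwa : w ≠ a) (hwb : w ≠ b) :
    G.dist w a = G.dist w b :=
  le_antisymm (dist_le_of_neighborSet_subset hG h.ge hwb)
    (dist_le_of_neighborSet_subset hG h.le hwa)

lemma dist_eq_two_of_neighborSet_eq (hG : G.Connected) {a b : V}
    (h : G.neighborSet a = G.neighborSet b) (hab : a ≠ b) : G.dist a b = 2 := by
  have hnadj : ¬G.Adj a b := fun hadj => G.irrefl (show b ∈ G.neighborSet b from h ▸ hadj)
  obtain ⟨p, -⟩ := hG.exists_walk_length_eq_dist a b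
  obtain ⟨c, hac, -, -⟩ := p.exists_eq_cons_of_ne hab
  have hbc : G.Adj c b := (show c ∈ G.neighborSet b from h ▸ hac).symm
  have hle : G.dist a b ≤ 2 := dist_le (Walk.cons hac (Walk.cons hbc Walk.nil))
  have hgt := hG.one_lt_dist_of_ne_of_not_adj hab hnadj
  omega

def homDeleteOfNeighborSetSubset [DecidableEq V] {u x : V} (hux : u ≠ x)
    (h : G.neighborSet x ⊆ G.neighborSet u) : G →g G.induce {w | w ≠ x} where
  toFun y := ⟨if y = x then u else y, by split_ifs with hy <;> assumption⟩
  map_rel' {p q} hpq := by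
    simp only [comap_adj, Function.Embedding.subtype_apply]
    split_ifs with hp hq hq
    · exact absurd (hp.trans hq.symm) hpq.ne
    · exact h (hp ▸ hpq)
    · exact (h (hq ▸ hpq.symm)).symm
    · exact hpq

lemma dist_induce_ne_eq (hG : G.Connected) {u x : V} (hux : u ≠ x)
    (h : G.neighborSet x ⊆ G.neighborSet u) (a b : {w | w ≠ x}) :
    (G.induce {w | w ≠ x}).dist a b = G.dist a b := by
  classical
  let f := homDeleteOfNeighborSetSubset hux h
  have hf : ∀ a : {w | w ≠ x}, f a = a := fun a =>
    Subtype.ext (if_neg a.2 : (if (a : V) = x then u else a) = a)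
  apply le_antisymm
  · simpa only [hf] using dist_map_le f (hG a b)
  · have hreach : (G.induce {w | w ≠ x}).Reachable a b := by
      simpa only [hf] using (hG a b).map f
    exact dist_map_le (Embedding.induce _).toHom hreach

end SimpleGraph

open SimpleGraph

section Resolving

variable {V : Type*} {G : SimpleGraph V}

lemma resolvingSet.mem_or_mem_of_neighborSet_eq {S : Set V} (hS : resolvingSet G S)
    (hG : G.Connected) {a b : V} (hab : a ≠ b) (h : G.neighborSet a = G.neighborSet b) :
    a ∈ S ∨ b ∈ S := by
  obtain ⟨w, hwS, hw⟩ := hS a b hab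
  by_contra! hab'
  exact hw (dist_eq_of_neighborSet_eq hG h (ne_of_mem_of_not_mem hwS hab'.1)
    (ne_of_mem_of_not_mem hwS hab'.2))

lemma resolvingSet.subset_of_twins {S C : Set V} (hS : resolvingSet G S) (hG : G.Connected)
    (hC : ∀ a ∈ C, ∀ a' ∈ C, G.neighborSet a = G.neighborSet a') {b c : V} (hb : b ∉ C)
    (hc : c ∈ C) (hcb : G.dist c b = 2) (hSC : ∀ w ∈ S \ C, G.dist w c = G.dist w b) :
    C ⊆ S := by
  intro t ht
  have hbt : b ≠ t := (ne_of_mem_of_not_mem ht hb).symm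
  obtain ⟨w, hwS, hw⟩ := hS t b hbt.symm
  by_cases hwC : w ∈ C
  · by_contra htS
    have hwt : w ≠ t := ne_of_mem_of_not_mem hwS htS
    refine hw ?_
    rw [dist_eq_two_of_neighborSet_eq hG (hC w hwC t ht) hwt, ← hcb, dist_comm,
      dist_comm (u := w)]
    exact dist_eq_of_neighborSet_eq hG (hC c hc w hwC) (ne_of_mem_of_not_mem hc hb).symm
      (ne_of_mem_of_not_mem hwC hb).symm
  · exact absurd ((dist_eq_of_neighborSet_eq hG (hC t ht c hc) (ne_of_mem_of_not_mem ht hwC).symm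
      (ne_of_mem_of_not_mem hc hwC).symm).trans (hSC w ⟨hwS, hwC⟩)) hw

lemma resolvingSet.resolves_delete_of_twins {S S₀ : Set V} (hS : resolvingSet G S)
    (hG : G.Connected) {u v x : V} (huv : u ≠ v) (hux : u ≠ x) (hvx : v ≠ x)
    (hC : ∀ a ∈ ({u, v, x} : Set V), ∀ a' ∈ ({u, v, x} : Set V),
      G.neighborSet a = G.neighborSet a')
    (hu : u ∈ S₀) (hsub : S \ {u, v, x} ⊆ S₀) (hv : {u, v, x} ⊆ S → v ∈ S₀) :
    ∀ a b, a ≠ x → b ≠ x → a ≠ b → ∃ w ∈ S₀, G.dist w a ≠ G.dist w b := by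
  have huC : u ∈ ({u, v, x} : Set V) := by simp
  have hvC : v ∈ ({u, v, x} : Set V) := by simp
  have hdist_out : ∀ t ∈ ({u, v, x} : Set V), ∀ y ∉ ({u, v, x} : Set V),
      G.dist t y = G.dist u y := fun t ht y hy => by
    rw [dist_comm, dist_comm (u := u)]
    exact dist_eq_of_neighborSet_eq hG (hC t ht u huC) (ne_of_mem_of_not_mem ht hy).symm
      (ne_of_mem_of_not_mem huC hy).symm
  have hsep_u : ∀ b, b ≠ u → G.dist u u ≠ G.dist u b := fun b hb => by
    rw [dist_self]
    exact (hG.pos_dist_of_ne hb.symm).ne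
  have hsep_v : ∀ b ∉ ({u, v, x} : Set V), ∃ w ∈ S₀, G.dist w v ≠ G.dist w b := by
    intro b hb
    by_contra! h
    by_cases hCS : {u, v, x} ⊆ S
    · have hvb := h v (hv hCS)
      rw [dist_self] at hvb
      exact (hG.pos_dist_of_ne (ne_of_mem_of_not_mem hvC hb)).ne hvb
    · refine hCS (hS.subset_of_twins hG hC hb hvC ?_ fun w hw => h w (hsub hw))
      calc G.dist v b = G.dist u b := hdist_out v hvC b hb
        _ = G.dist u v := (h u hu).symm
        _ = 2 := dist_eq_two_of_neighborSet_eq hG (hC u huC v hvC) huv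
  have hsep_out : ∀ a b, a ∉ ({u, v, x} : Set V) → b ∉ ({u, v, x} : Set V) → a ≠ b →
      ∃ w ∈ S₀, G.dist w a ≠ G.dist w b := by
    intro a b ha hb hab
    obtain ⟨w, hwS, hw⟩ := hS a b hab
    by_cases hwC : w ∈ ({u, v, x} : Set V)
    · exact ⟨u, hu, by rwa [← hdist_out w hwC a ha, ← hdist_out w hwC b hb]⟩
    · exact ⟨w, hsub ⟨hwS, hwC⟩, hw⟩
  intro a b hax hbx hab
  rcases eq_or_ne a u with rfl | hau
  · exact ⟨a, hu, hsep_u b hab.symm⟩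
  rcases eq_or_ne b u with rfl | hbu
  · exact ⟨b, hu, (hsep_u a hab).symm⟩
  rcases eq_or_ne a v with rfl | hav
  · exact hsep_v b (by simp [hbu, hab.symm, hbx])
  rcases eq_or_ne b v with rfl | hbv
  · obtain ⟨w, hw, hne⟩ := hsep_v a (by simp [hau, hab, hax])
    exact ⟨w, hw, hne.symm⟩
  exact hsep_out a b (by simp [hau, hav, hax]) (by simp [hbu, hbv, hbx]) hab

lemma resolvingSet.exists_finset_resolves_delete_of_twins [DecidableEq V] {S : Finset V}
    (hS : resolvingSet G S) (hG : G.Connected) {u v x : V} (huv : u ≠ v) (hux : u ≠ x)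
    (hvx : v ≠ x) (hC : ∀ a ∈ ({u, v, x} : Set V), ∀ a' ∈ ({u, v, x} : Set V),
      G.neighborSet a = G.neighborSet a') :
    ∃ S₀ : Finset V, x ∉ S₀ ∧ S₀.card + 1 ≤ S.card ∧
      ∀ a b, a ≠ x → b ≠ x → a ≠ b → ∃ w ∈ S₀, G.dist w a ≠ G.dist w b := by
  suffices ∃ S₀ : Finset V, x ∉ S₀ ∧ u ∈ S₀ ∧ (↑S \ {u, v, x} : Set V) ⊆ ↑S₀ ∧
      ({u, v, x} ⊆ (↑S : Set V) → v ∈ S₀) ∧ S₀.card + 1 ≤ S.card by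
    obtain ⟨S₀, hx, hu, hsub, hv, hcard⟩ := this
    exact ⟨S₀, hx, hcard, hS.resolves_delete_of_twins hG huv hux hvx hC hu hsub hv⟩
  have hmem : ∀ a ∈ ({u, v, x} : Set V), ∀ b ∈ ({u, v, x} : Set V), a ≠ b → a ∈ S ∨ b ∈ S :=
    fun a ha b hb hab => hS.mem_or_mem_of_neighborSet_eq hG hab (hC a ha b hb)
  by_cases hxS : x ∈ S
  · by_cases huS : u ∈ S
    · refine ⟨S.erase x, by simp, by simp [hux, huS], ?_, ?_, ?_⟩
      · intro w hw
        simp_all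
      · intro h
        simp_all [Set.insert_subset_iff]
      · rw [Finset.card_erase_of_mem hxS]
        have := Finset.card_pos.mpr ⟨x, hxS⟩
        omega
    · have hvS : v ∈ S := (hmem u (by simp) v (by simp) huv).resolve_left huS
      refine ⟨insert u ((S.erase x).erase v), by simp [hux.symm], by simp, ?_, ?_, ?_⟩
      · intro w hw
        simp_all
      · intro h
        simp_all [Set.insert_subset_iff]
      · have := Finset.card_insert_le u ((S.erase x).erase v)
        rw [Finset.card_erase_of_mem (by simp [hvS, hvx]), Finset.card_erase_of_mem hxS] at this
        have := Finset.card_pos.mpr ⟨x, hxS⟩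
        have : 1 < S.card := Finset.one_lt_card.mpr ⟨v, hvS, x, hxS, hvx⟩
        omega
  · have huS : u ∈ S := (hmem u (by simp) x (by simp) hux).resolve_right hxS
    have hvS : v ∈ S := (hmem v (by simp) x (by simp) hvx).resolve_right hxS
    refine ⟨S.erase v, by simp [hxS], by simp [huv, huS], ?_, ?_, ?_⟩
    · intro w hw
      simp_all
    · intro h
      simp_all [Set.insert_subset_iff]
    · rw [Finset.card_erase_of_mem hvS]
      have := Finset.card_pos.mpr ⟨v, hvS⟩
      omega

lemma resolvingSet.insert_image_val_of_induce (hG : G.Connected) {u x : V} (hux : u ≠ x)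
    (h : G.neighborSet x ⊆ G.neighborSet u) {T : Set {w | w ≠ x}}
    (hT : resolvingSet (G.induce {w | w ≠ x}) T) :
    resolvingSet G (insert x (Subtype.val '' T)) := by
  intro a b hab
  by_cases ha : a = x
  · subst ha
    exact ⟨a, Set.mem_insert _ _, by rw [dist_self]; exact (hG.pos_dist_of_ne hab).ne⟩
  by_cases hb : b = x
  · subst hb
    exact ⟨b, Set.mem_insert _ _, by rw [dist_self]; exact (hG.pos_dist_of_ne hab.symm).ne'⟩
  obtain ⟨w, hwT, hw⟩ := hT ⟨a, ha⟩ ⟨b, hb⟩ (by simpa using hab)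
  refine ⟨w, Set.mem_insert_of_mem _ ⟨w, hwT, rfl⟩, ?_⟩
  rwa [dist_induce_ne_eq hG hux h, dist_induce_ne_eq hG hux h] at hw

end Resolving

theorem stmt_5_general {V : Type*} [DecidableEq V]
    (G : SimpleGraph V) (hG : G.Connected)
    (u v x : V) (huv : u ≠ v) (hux : u ≠ x) (hvx : v ≠ x)
    (htw1 : G.neighborSet u = G.neighborSet v)
    (htw2 : G.neighborSet v = G.neighborSet x)
    (k : ℕ) (hk : 1 ≤ k) :
    (∃ S : Finset V, resolvingSet G ↑S ∧ S.card ≤ k) ↔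
      (∃ S : Finset ↥{w : V | w ≠ x},
        resolvingSet (G.induce {w : V | w ≠ x}) ↑S ∧ S.card ≤ k - 1) := by
  have hux' : G.neighborSet x ⊆ G.neighborSet u := (htw1.trans htw2).ge
  constructor
  · rintro ⟨S, hS, hcard⟩
    have hC : ∀ a ∈ ({u, v, x} : Set V), ∀ a' ∈ ({u, v, x} : Set V),
        G.neighborSet a = G.neighborSet a' := by
      simp only [Set.mem_insert_iff, Set.mem_singleton_iff]
      rintro a (rfl | rfl | rfl) a' (rfl | rfl | rfl) <;> simp only [htw1, htw2]
    obtain ⟨S₀, hxS₀, hcard₀, hS₀⟩ :=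
      hS.exists_finset_resolves_delete_of_twins hG huv hux hvx hC
    refine ⟨S₀.subtype (· ≠ x), fun a b hab => ?_, ?_⟩
    · obtain ⟨w, hw, hne⟩ := hS₀ a b a.2 b.2 (Subtype.coe_ne_coe.mpr hab)
      refine ⟨⟨w, ne_of_mem_of_not_mem hw hxS₀⟩, by simpa using hw, ?_⟩
      rwa [dist_induce_ne_eq hG hux hux', dist_induce_ne_eq hG hux hux']
    · have := Finset.card_subtype (· ≠ x) S₀ ▸ Finset.card_filter_le S₀ (· ≠ x)
      omega
  · rintro ⟨T, hT, hcard⟩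
    refine ⟨insert x (T.map (Function.Embedding.subtype _)), ?_, ?_⟩
    · simpa using hT.insert_image_val_of_induce hG hux hux'
    · have := Finset.card_insert_le x (T.map (Function.Embedding.subtype _))
      rw [Finset.card_map] at this
      omega

theorem stmt_5 {V : Type*} [Fintype V] [DecidableEq V]
    (G : SimpleGraph V) (hG : G.Connected)
    (u v x : V) (huv : u ≠ v) (hux : u ≠ x) (hvx : v ≠ x)
    (htw1 : G.neighborSet u = G.neighborSet v)
    (htw2 : G.neighborSet v = G.neighborSet x)
    (k : ℕ) (hk : 1 ≤ k)
    (hG' : (G.induce {w : V | w ≠ x}).Connected) :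
    (∃ S : Finset V, resolvingSet G ↑S ∧ S.card ≤ k) ↔
      (∃ S : Finset ↥{w : V | w ≠ x},
        resolvingSet (G.induce {w : V | w ≠ x}) ↑S ∧ S.card ≤ k - 1) :=
  stmt_5_general G hG u v x huv hux hvx htw1 htw2 k hk
end

section
/- Let G be a connected simple graph, X a vertex cover of G, and I = V(G) \ X. Let F ⊆ I be a set such that every vertex u ∈ I \ F has a distinct open neighborhood from every other vertex of I \ F (no two vertices of I \ F are false twins). Then X ∪ F is a resolving set of G. -/
namespace SimpleGraph

variable {V : Type*} {G : SimpleGraph V}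

theorem Connected.dist_self_ne (hG : G.Connected) {w y : V} (h : w ≠ y) :
    G.dist w w ≠ G.dist w y := by
  rw [dist_self]
  exact fun h0 => h (hG.dist_eq_zero_iff.mp h0.symm)

theorem dist_ne_of_adj_of_not_adj {x y z : V} (hx : G.Adj z x) (hy : ¬G.Adj z y) :
    G.dist z x ≠ G.dist z y := by
  rw [dist_eq_one_iff_adj.mpr hx]
  exact fun h => hy (dist_eq_one_iff_adj.mp h.symm)

theorem exists_adj_dist_ne_of_neighborSet_ne {u v : V} (h : G.neighborSet u ≠ G.neighborSet v) :
    ∃ z, (G.Adj u z ∨ G.Adj v z) ∧ G.dist z u ≠ G.dist z v := by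
  obtain ⟨z, hz⟩ : ∃ z, ¬(G.Adj u z ↔ G.Adj v z) := by
    by_contra! hiff
    exact h (Set.ext hiff)
  by_cases hu : G.Adj u z
  · exact ⟨z, .inl hu, dist_ne_of_adj_of_not_adj hu.symm fun hv => hz ⟨fun _ => hv.symm, fun _ => hu⟩⟩
  · have hv : G.Adj v z := by tauto
    exact ⟨z, .inr hv, (dist_ne_of_adj_of_not_adj hv.symm fun hu' => hu hu'.symm).symm⟩

end SimpleGraph

theorem stmt_7_general {V : Type*} (G : SimpleGraph V) (hG : G.Connected)
    (X : Set V) (hX : ∀ a b : V, G.Adj a b → a ∈ X ∨ b ∈ X)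
    (F : Set V)
    (hdist : ∀ u v : V, u ∈ Xᶜ \ F → v ∈ Xᶜ \ F → u ≠ v →
      G.neighborSet u ≠ G.neighborSet v) :
    resolvingSet G (X ∪ F) := by
  intro x y hxy
  by_cases hx : x ∈ X ∪ F
  · exact ⟨x, hx, hG.dist_self_ne hxy⟩
  by_cases hy : y ∈ X ∪ F
  · exact ⟨y, hy, (hG.dist_self_ne hxy.symm).symm⟩
  have hx' : x ∈ Xᶜ \ F := by simpa [not_or] using hx
  have hy' : y ∈ Xᶜ \ F := by simpa [not_or] using hy
  obtain ⟨z, hadj, hz⟩ :=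
    SimpleGraph.exists_adj_dist_ne_of_neighborSet_ne (hdist x y hx' hy' hxy)
  have hzX : z ∈ X := by
    rcases hadj with h | h
    · exact (hX _ _ h).resolve_left hx'.1
    · exact (hX _ _ h).resolve_left hy'.1
  exact ⟨z, .inl hzX, hz⟩

theorem stmt_7 {V : Type*} (G : SimpleGraph V) (hG : G.Connected)
    (X : Set V) (hX : ∀ a b : V, G.Adj a b → a ∈ X ∨ b ∈ X)
    (F : Set V) (hF : F ⊆ Xᶜ)
    (hdist : ∀ u v : V, u ∈ Xᶜ \ F → v ∈ Xᶜ \ F → u ≠ v →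
      G.neighborSet u ≠ G.neighborSet v) :
    resolvingSet G (X ∪ F) :=
  stmt_7_general G hG X hX F hdist
end

section
/- Let G be a connected simple graph, X a vertex cover of G, and S the set of simplicial vertices of G. Then X ∪ S is a geodetic set of G. -/
def simplicialVertex {V : Type*} (G : SimpleGraph V) (v : V) : Prop :=
  ∀ x ∈ G.neighborSet v, ∀ y ∈ G.neighborSet v, x ≠ y → G.Adj x y

def geodeticSet {V : Type*} (G : SimpleGraph V) (S : Set V) : Prop :=
  ∀ u : V, ∃ s₁ ∈ S, ∃ s₂ ∈ S, G.dist s₁ u + G.dist u s₂ = G.dist s₁ s₂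

namespace SimpleGraph

variable {V : Type*} {G : SimpleGraph V} {u x y : V}

lemma dist_eq_two_of_adj_of_adj (hxu : G.Adj x u) (huy : G.Adj u y) (hne : x ≠ y)
    (hxy : ¬ G.Adj x y) : G.dist x y = 2 := by
  rw [dist, edist_eq_two_iff.mpr ⟨hne, hxy, u, G.mem_commonNeighbors.mpr ⟨hxu, huy.symm⟩⟩]
  rfl

lemma dist_add_dist_eq_of_adj_of_adj (hxu : G.Adj x u) (huy : G.Adj u y) (hne : x ≠ y)
    (hxy : ¬ G.Adj x y) : G.dist x u + G.dist u y = G.dist x y := by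
  rw [dist_eq_one_iff_adj.mpr hxu, dist_eq_one_iff_adj.mpr huy,
    dist_eq_two_of_adj_of_adj hxu huy hne hxy]

end SimpleGraph

lemma exists_adj_adj_not_adj_of_not_simplicialVertex {V : Type*} {G : SimpleGraph V} {v : V}
    (hv : ¬ simplicialVertex G v) : ∃ x y, G.Adj v x ∧ G.Adj v y ∧ x ≠ y ∧ ¬ G.Adj x y := by
  simpa [simplicialVertex] using hv

theorem stmt_12_general {V : Type*} (G : SimpleGraph V)
    (X : Set V) (hX : ∀ a b : V, G.Adj a b → a ∈ X ∨ b ∈ X) :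
    geodeticSet G (X ∪ {v : V | simplicialVertex G v}) := by
  intro u
  by_cases hu : u ∈ X ∪ {v | simplicialVertex G v}
  · exact ⟨u, hu, u, hu, by simp⟩
  simp only [Set.mem_union, Set.mem_ofPred_eq, not_or] at hu
  obtain ⟨huX, huS⟩ := hu
  obtain ⟨x, y, hx, hy, hne, hxy⟩ := exists_adj_adj_not_adj_of_not_simplicialVertex huS
  have hxX : x ∈ X := (hX u x hx).resolve_left huX
  have hyX : y ∈ X := (hX u y hy).resolve_left huX
  exact ⟨x, .inl hxX, y, .inl hyX, SimpleGraph.dist_add_dist_eq_of_adj_of_adj hx.symm hy hne hxy⟩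

theorem stmt_12 {V : Type*} (G : SimpleGraph V) (hG : G.Connected)
    (X : Set V) (hX : ∀ a b : V, G.Adj a b → a ∈ X ∨ b ∈ X) :
    geodeticSet G (X ∪ {v : V | simplicialVertex G v}) :=
  stmt_12_general G X hX
end
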